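/- arXiv:0808.3800 — 2 statements merged into one kernel-verified Lean document; each statement's English description precedes it below -/
import Mathlib

section
/- Let γ : [−1, 1] → ℂ be an injective continuous curve with γ(0) = 0, which is differentiable at 0 with γ'(0) ≠ 0. Let λ ∈ ℂ with |λ| > 1, and let I be a subset of the image of γ such that λ⁻¹·I ⊆ I and I contains at least one nonzero point. Then λ is real, and I is contained in the straight line {t·γ'(0) : t ∈ ℝ} through 0 in the tangent direction of γ at 0. -/
/-! For a nonzero `z ∈ I` the orbit `λ⁻ⁿ z` stays in `I` and tends to `0 = γ 0`. Writing
`λ⁻ⁿ z = γ tₙ`, injectivity of `γ` on the compact interval forces `tₙ → 0`, so the difference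
quotients `λ⁻ⁿ z / tₙ` tend to `v`, i.e. `tₙ λⁿ → z / v ≠ 0` with `tₙ` real. The successive
quotients `(tₙ₊₁ / tₙ) λ` then tend to `1`, so `λ` is real, and `z / v` is a limit of reals. -/

open Complex Set Filter Topology

theorem Filter.Tendsto.of_comp_of_injOn {ι X Y : Type*} [TopologicalSpace X] [TopologicalSpace Y]
    [T2Space Y] {g : X → Y} {K : Set X} (hK : IsCompact K) (hg : ContinuousOn g K)
    (hinj : InjOn g K) {f : Filter ι} {u : ι → X} (hu : ∀ i, u i ∈ K) {a : X} (ha : a ∈ K)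
    (h : Tendsto (g ∘ u) f (𝓝 (g a))) : Tendsto u f (𝓝 a) := by
  have : CompactSpace K := isCompact_iff_compactSpace.mp hK
  have hemb : IsClosedEmbedding (K.domRestrict g) :=
    hg.domRestrict.isClosedEmbedding hinj.injective
  have hsub : Tendsto (fun i => (⟨u i, hu i⟩ : K)) f (𝓝 ⟨a, ha⟩) :=
    hemb.tendsto_nhds_iff.mpr h
  exact continuous_subtype_val.continuousAt.tendsto.comp hsub

theorem exists_tendsto_slope_of_tendsto {ι E : Type*} [NormedAddCommGroup E] [NormedSpace ℝ E]
    {γ : ℝ → E} {K : Set ℝ} (hK : IsCompact K) (hcont : ContinuousOn γ K) (hinj : InjOn γ K)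
    {a : ℝ} (ha : a ∈ K) {v : E} (hγ : HasDerivAt γ v a) {f : Filter ι} {x : ι → E}
    (hxK : ∀ i, x i ∈ γ '' K) (hxa : ∀ i, x i ≠ γ a) (hx : Tendsto x f (𝓝 (γ a))) :
    ∃ t : ι → ℝ, (∀ i, γ (t i) = x i) ∧ Tendsto (fun i => slope γ a (t i)) f (𝓝 v) := by
  choose t htK hγt using hxK
  have hta : Tendsto t f (𝓝 a) :=
    Tendsto.of_comp_of_injOn hK hcont hinj htK ha (by simpa [Function.comp_def, hγt] using hx)
  have hta' : Tendsto t f (𝓝[≠] a) :=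
    tendsto_nhdsWithin_of_tendsto_nhds_of_eventually_within _ hta
      (Eventually.of_forall fun i hi => hxa i (by rw [← hγt, hi]))
  exact ⟨t, hγt, (hasDerivAt_iff_tendsto_slope.mp hγ).comp hta'⟩

theorem Complex.im_eq_zero_of_tendsto {α : Type*} {f : Filter α} [f.NeBot] {u : α → ℂ} {c : ℂ}
    (h : Tendsto u f (𝓝 c)) (hu : ∀ᶠ x in f, (u x).im = 0) : c.im = 0 :=
  (isClosed_eq continuous_im continuous_const).mem_of_tendsto h hu

theorem Complex.im_eq_zero_of_tendsto_ofReal_mul {α : Type*} {f : Filter α} [f.NeBot]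
    {r : α → ℝ} {l : ℂ} (h : Tendsto (fun x => (r x : ℂ) * l) f (𝓝 1)) : l.im = 0 := by
  have hl : l ≠ 0 := by
    rintro rfl
    simp only [mul_zero] at h
    exact one_ne_zero (tendsto_nhds_unique h tendsto_const_nhds)
  have hr : Tendsto (fun x => (r x : ℂ)) f (𝓝 l⁻¹) := by
    simpa [mul_assoc, mul_inv_cancel₀ hl] using h.mul_const l⁻¹
  have hinv : (starRingEnd ℂ) l⁻¹ = l⁻¹ :=
    conj_eq_iff_im.mpr (im_eq_zero_of_tendsto hr (Eventually.of_forall fun x => ofReal_im _))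
  rw [map_inv₀, inv_inj] at hinv
  exact conj_eq_iff_im.mp hinv

theorem Complex.im_eq_zero_of_tendsto_ofReal_mul_pow {t : ℕ → ℝ} {l c : ℂ} (hc : c ≠ 0)
    (h : Tendsto (fun n => (t n : ℂ) * l ^ n) atTop (𝓝 c)) : l.im = 0 ∧ c.im = 0 := by
  have hratio : Tendsto (fun n => ((t (n + 1) / t n : ℝ) : ℂ) * l) atTop (𝓝 1) := by
    have := ((h.comp (tendsto_add_atTop_nat 1)).div h hc)
    rw [div_self hc] at this
    refine this.congr fun n => ?_
    simp only [Function.comp_apply, Pi.div_apply, ofReal_div]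
    rw [mul_div_mul_comm, pow_succ]
    rcases eq_or_ne l 0 with rfl | hl
    · simp
    · rw [mul_div_cancel_left₀ l (pow_ne_zero n hl)]
  have hl : l.im = 0 := im_eq_zero_of_tendsto_ofReal_mul hratio
  refine ⟨hl, im_eq_zero_of_tendsto h (Eventually.of_forall fun n => ?_)⟩
  rw [← conj_eq_iff_re.mp (conj_eq_iff_im.mpr hl)]
  norm_cast

theorem exists_tendsto_ofReal_mul_pow_of_mem
    {γ : ℝ → ℂ} (hcont : ContinuousOn γ (Icc (-1 : ℝ) 1)) (hinj : InjOn γ (Icc (-1 : ℝ) 1))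
    (hzero : γ 0 = 0) {v : ℂ} (hderiv : HasDerivAt γ v 0) (hv : v ≠ 0) {l : ℂ} (hl : 1 < ‖l‖)
    {I : Set ℂ} (hIγ : I ⊆ γ '' Icc (-1 : ℝ) 1) (hinv : (fun z => l⁻¹ * z) '' I ⊆ I)
    {z : ℂ} (hzI : z ∈ I) (hz : z ≠ 0) :
    ∃ t : ℕ → ℝ, Tendsto (fun n => (t n : ℂ) * l ^ n) atTop (𝓝 (z / v)) := by
  have hl0 : l ≠ 0 := norm_pos_iff.mp (one_pos.trans hl)
  have horbit : ∀ n, l⁻¹ ^ n * z ∈ I := fun n => by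
    simpa using (mapsTo_iff_image_subset.mpr hinv).iterate n hzI
  have hne : ∀ n, l⁻¹ ^ n * z ≠ γ 0 :=
    hzero ▸ fun n => mul_ne_zero (pow_ne_zero _ (inv_ne_zero hl0)) hz
  have hlim : Tendsto (fun n => l⁻¹ ^ n * z) atTop (𝓝 (γ 0)) := by
    have hl1 : ‖l⁻¹‖ < 1 := by rw [norm_inv]; exact inv_lt_one_of_one_lt₀ hl
    simpa [hzero] using (tendsto_pow_atTop_nhds_zero_of_norm_lt_one hl1).mul_const z
  obtain ⟨t, hγt, hslope⟩ := exists_tendsto_slope_of_tendsto isCompact_Icc hcont hinj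
    (by norm_num) hderiv (fun n => hIγ (horbit n)) hne hlim
  refine ⟨t, (tendsto_const_nhds.div hslope hv).congr fun n => ?_⟩
  rw [Pi.div_apply, slope_def_module, hγt, hzero, sub_zero, sub_zero, real_smul, ofReal_inv,
    inv_pow]
  field_simp

/-- Let `γ : [−1, 1] → ℂ` be an injective continuous curve with `γ 0 = 0`, differentiable at
`0` with `γ'(0) = v ≠ 0`.  Let `|λ| > 1` and let `I` be a subset of the image of `γ` with
`λ⁻¹ · I ⊆ I` containing a nonzero point.  Then `λ` is real and `I` is contained in the
straight line `{t·v : t ∈ ℝ}` through `0` in the tangent direction of `γ` at `0`. -/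
theorem invariant_subset_of_smooth_curve_in_line
    (γ : ℝ → ℂ) (hcont : ContinuousOn γ (Set.Icc (-1 : ℝ) 1))
    (hinj : Set.InjOn γ (Set.Icc (-1 : ℝ) 1))
    (hzero : γ 0 = 0)
    (v : ℂ) (hderiv : HasDerivAt γ v 0) (hv : v ≠ 0)
    (l : ℂ) (hl : 1 < ‖l‖)
    (I : Set ℂ) (hIγ : I ⊆ γ '' Set.Icc (-1 : ℝ) 1)
    (hinv : (fun z => l⁻¹ * z) '' I ⊆ I)
    (hne : ∃ z ∈ I, z ≠ 0) :
    l.im = 0 ∧ I ⊆ {z : ℂ | ∃ t : ℝ, z = t * v} := by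
  have hreal : ∀ z ∈ I, z ≠ 0 → l.im = 0 ∧ (z / v).im = 0 := fun z hzI hz =>
    have ⟨_, ht⟩ :=
      exists_tendsto_ofReal_mul_pow_of_mem hcont hinj hzero hderiv hv hl hIγ hinv hzI hz
    im_eq_zero_of_tendsto_ofReal_mul_pow (div_ne_zero hz hv) ht
  obtain ⟨z₀, hz₀I, hz₀⟩ := hne
  refine ⟨(hreal z₀ hz₀I hz₀).1, fun z hzI => ?_⟩
  rcases eq_or_ne z 0 with rfl | hz
  · exact ⟨0, by simp⟩
  · refine ⟨(z / v).re, ?_⟩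
    rw [conj_eq_iff_re.mp (conj_eq_iff_im.mpr (hreal z hzI hz).2), div_mul_cancel₀ z hv]
end

section
/- Let f be a nonconstant rational function (a quotient of two coprime polynomials over ℂ, viewed as a meromorphic function on ℂ) and let a and b be two distinct points of the Riemann sphere such that the full preimage f⁻¹({a, b}) is contained in the real line, where the preimage of ∞ means the set of poles of f. Then f maps the real line (minus the poles of f) into a circle on the Riemann sphere, i.e., into a Euclidean circle or a straight line in ℂ. -/
open Complex Polynomial

noncomputable section

/-- A circle on the Riemann sphere, viewed in `ℂ`: a Euclidean circle or a straight line. -/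
def IsCircleOrLine (S : Set ℂ) : Prop :=
  (∃ (c : ℂ) (r : ℝ), 0 < r ∧ S = Metric.sphere c r) ∨
  (∃ a v : ℂ, v ≠ 0 ∧ S = {z : ℂ | ∃ t : ℝ, z = a + t * v})

/-- The preimage of a point of the Riemann sphere under the rational function `P/Q`:
the preimage of a finite point `w` is the zero set of `P − w·Q`, and the preimage of `∞`
is the zero set of `Q`. -/
def ratSpherePreimage (P Q : Polynomial ℂ) (a : OnePoint ℂ) : Set ℂ :=
  {z : ℂ | (a = OnePoint.infty ∧ Q.eval z = 0) ∨
    (∃ w : ℂ, a = (w : OnePoint ℂ) ∧ P.eval z - w * Q.eval z = 0)}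

/-- The real line inside `ℂ`. -/
def realLine : Set ℂ := {z : ℂ | z.im = 0}

end

/-!
If all roots of a polynomial `A` are real, then on the real line `A(x)` is a real multiple of
the leading coefficient `lc A`. With `f = P/Q`, `f - w = (P - wQ)/Q`; so when `b = ∞` the
values of `f` on the real line lie on the line through `a` in direction
`lc (P - aQ) / lc Q`, and when `a = w₁`, `b = w₂` are finite they satisfy
`(f - w₁) · conj (f - w₂) ∈ d · ℝ` with `d = lc (P - w₁Q) · conj (lc (P - w₂Q))`. This locus
lies on the line through `w₁, w₂` when `d` is real, and on a circle through `w₁, w₂` otherwise.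
-/

open ComplexConjugate

lemma ne_zero_of_setOf_eval_eq_zero_subset_realLine {A : ℂ[X]}
    (hA : {z | A.eval z = 0} ⊆ realLine) : A ≠ 0 := by
  rintro rfl
  simpa [realLine] using @hA I (by simp)

lemma exists_eval_ofReal_eq_leadingCoeff_mul {A : ℂ[X]}
    (hA : {z | A.eval z = 0} ⊆ realLine) (x : ℝ) :
    ∃ t : ℝ, A.eval (x : ℂ) = A.leadingCoeff * t := by
  refine ⟨(A.roots.map fun r => x - r.re).prod, ?_⟩
  have hroots : ∀ r ∈ A.roots, (x : ℂ) - r = ((x - r.re : ℝ) : ℂ) := fun r hr => by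
    have hr : r.im = 0 := hA (isRoot_of_mem_roots hr)
    apply Complex.ext <;> simp [hr]
  conv_lhs => rw [(IsAlgClosed.splits A).eq_prod_roots]
  have := map_multiset_prod Complex.ofRealHom (A.roots.map fun r => x - r.re)
  simp only [Complex.ofRealHom_eq_coe, Multiset.map_map, Function.comp_def] at this
  simp [eval_multiset_prod, Multiset.map_congr rfl hroots, this]

lemma exists_eq_add_real_mul_sub_of_im_mul_conj_eq_zero {w₁ w₂ w : ℂ} (hw : w₁ ≠ w₂)
    (h : ((w - w₁) * conj (w - w₂)).im = 0) :
    ∃ t : ℝ, w = w₁ + t * (w₂ - w₁) := by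
  have hv : conj (w₂ - w₁) ≠ 0 := (_root_.map_ne_zero _).mpr (sub_ne_zero.mpr hw.symm)
  have hreal : (((w - w₁) * conj (w₂ - w₁)).im) = 0 := by
    have : w - w₂ = (w - w₁) - (w₂ - w₁) := by ring
    rw [this, map_sub, mul_sub, Complex.mul_conj, Complex.sub_im, Complex.ofReal_im] at h
    linarith
  refine ⟨((w - w₁) * conj (w₂ - w₁)).re / Complex.normSq (w₂ - w₁), ?_⟩
  have hc : ((((w - w₁) * conj (w₂ - w₁)).re : ℝ) : ℂ) = (w - w₁) * conj (w₂ - w₁) :=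
    Complex.ext rfl (by simp only [Complex.ofReal_im, hreal])
  rw [Complex.ofReal_div, hc, ← Complex.mul_conj]
  field_simp
  ring

lemma normSq_sub_eq_of_mul_conj_eq {w₁ w₂ d z₀ w : ℂ} (t : ℝ) (hd : d.im ≠ 0)
    (hz₀ : z₀ * (d - conj d) = w₂ * d - w₁ * conj d)
    (h : (w - w₁) * conj (w - w₂) = d * t) :
    Complex.normSq (w - z₀) = Complex.normSq (w₁ - z₀) := by
  have he : d - conj d ≠ 0 := by
    rw [Complex.sub_conj]; simpa using hd
  have hz₀' : conj z₀ * (d - conj d) = conj w₁ * d - conj w₂ * conj d := by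
    have := congrArg conj hz₀
    simp only [map_mul, map_sub, Complex.conj_conj] at this
    linear_combination -this
  have h' : (conj w - conj w₁) * (w - w₂) = conj d * t := by
    simpa using congrArg conj h
  have key : (d - conj d) * (Complex.normSq (w - z₀) - Complex.normSq (w₁ - z₀) : ℂ) = 0 := by
    simp only [← Complex.mul_conj, map_sub] at h ⊢
    -- the left side equals `d * conj (w - w₁) * (w - w₂) - conj d * (w - w₁) * conj (w - w₂)`
    linear_combination (w₁ - w) * hz₀' + (conj w₁ - conj w) * hz₀ + d * h' - conj d * h
  exact_mod_cast sub_eq_zero.mp ((mul_eq_zero.mp key).resolve_left he)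

lemma exists_isCircleOrLine_of_mul_conj_eq {w₁ w₂ : ℂ} (d : ℂ) (hw : w₁ ≠ w₂) :
    ∃ S : Set ℂ, IsCircleOrLine S ∧
      ∀ (w : ℂ) (t : ℝ), (w - w₁) * conj (w - w₂) = d * t → w ∈ S := by
  by_cases hd : d.im = 0
  · refine ⟨{z | ∃ t : ℝ, z = w₁ + t * (w₂ - w₁)},
      Or.inr ⟨w₁, w₂ - w₁, sub_ne_zero.mpr hw.symm, rfl⟩, fun w t h => ?_⟩
    refine exists_eq_add_real_mul_sub_of_im_mul_conj_eq_zero hw ?_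
    rw [h, Complex.mul_im]
    simp [hd]
  · have he : d - conj d ≠ 0 := by
      rw [Complex.sub_conj]; simpa using hd
    set z₀ := (w₂ * d - w₁ * conj d) / (d - conj d)
    have hz₀ : z₀ * (d - conj d) = w₂ * d - w₁ * conj d := div_mul_cancel₀ _ he
    have hr : w₁ - z₀ ≠ 0 := by
      intro h
      have : (w₁ - w₂) * d = 0 := by linear_combination (d - conj d) * h + hz₀
      simp_all [sub_eq_zero]
    refine ⟨Metric.sphere z₀ ‖w₁ - z₀‖, Or.inl ⟨z₀, _, norm_pos_iff.mpr hr, rfl⟩,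
      fun w t h => ?_⟩
    rw [mem_sphere_iff_norm, Complex.norm_def, Complex.norm_def,
      normSq_sub_eq_of_mul_conj_eq t hd hz₀ h]

lemma ratSpherePreimage_infty (P Q : ℂ[X]) :
    ratSpherePreimage P Q OnePoint.infty = {z | Q.eval z = 0} := by
  ext z; simp [ratSpherePreimage]

lemma ratSpherePreimage_coe (P Q : ℂ[X]) (w : ℂ) :
    ratSpherePreimage P Q w = {z | (P - C w * Q).eval z = 0} := by
  ext z; simp [ratSpherePreimage]

lemma eval_div_eval_sub {P Q : ℂ[X]} {z : ℂ} (hz : Q.eval z ≠ 0) (w : ℂ) :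
    P.eval z / Q.eval z - w = (P - C w * Q).eval z / Q.eval z := by
  simp only [eval_sub, eval_mul, eval_C]
  field_simp

lemma exists_isCircleOrLine_of_infty_coe {P Q : ℂ[X]} {w : ℂ}
    (hQ : {z | Q.eval z = 0} ⊆ realLine) (hw : {z | (P - C w * Q).eval z = 0} ⊆ realLine) :
    ∃ S : Set ℂ, IsCircleOrLine S ∧
      ∀ x : ℝ, Q.eval (x : ℂ) ≠ 0 → P.eval (x : ℂ) / Q.eval (x : ℂ) ∈ S := by
  have hlc : (P - C w * Q).leadingCoeff / Q.leadingCoeff ≠ 0 :=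
    div_ne_zero (leadingCoeff_ne_zero.mpr (ne_zero_of_setOf_eval_eq_zero_subset_realLine hw))
      (leadingCoeff_ne_zero.mpr (ne_zero_of_setOf_eval_eq_zero_subset_realLine hQ))
  refine ⟨_, Or.inr ⟨w, _, hlc, rfl⟩, fun x hx => ?_⟩
  obtain ⟨s, hs⟩ := exists_eval_ofReal_eq_leadingCoeff_mul hw x
  obtain ⟨u, hu⟩ := exists_eval_ofReal_eq_leadingCoeff_mul hQ x
  have hu0 : (u : ℂ) ≠ 0 := by rintro h; simp [hu, h] at hx
  refine ⟨s / u, ?_⟩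
  rw [← sub_eq_iff_eq_add', eval_div_eval_sub hx, hs, hu]
  push_cast
  field_simp

lemma exists_isCircleOrLine_of_coe_coe {P Q : ℂ[X]} {w₁ w₂ : ℂ} (hw : w₁ ≠ w₂)
    (h₁ : {z | (P - C w₁ * Q).eval z = 0} ⊆ realLine)
    (h₂ : {z | (P - C w₂ * Q).eval z = 0} ⊆ realLine) :
    ∃ S : Set ℂ, IsCircleOrLine S ∧
      ∀ x : ℝ, Q.eval (x : ℂ) ≠ 0 → P.eval (x : ℂ) / Q.eval (x : ℂ) ∈ S := by
  obtain ⟨S, hS, hmem⟩ := exists_isCircleOrLine_of_mul_conj_eq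
    ((P - C w₁ * Q).leadingCoeff * conj (P - C w₂ * Q).leadingCoeff) hw
  refine ⟨S, hS, fun x hx => ?_⟩
  obtain ⟨s, hs⟩ := exists_eval_ofReal_eq_leadingCoeff_mul h₁ x
  obtain ⟨u, hu⟩ := exists_eval_ofReal_eq_leadingCoeff_mul h₂ x
  refine hmem _ (s * u / Complex.normSq (Q.eval (x : ℂ))) ?_
  rw [eval_div_eval_sub hx, eval_div_eval_sub hx, hs, hu, map_div₀, map_mul,
    Complex.conj_ofReal, Complex.ofReal_div, Complex.ofReal_mul, ← Complex.mul_conj]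
  ring

theorem rational_two_real_preimages_general
    (P Q : Polynomial ℂ)
    (a b : OnePoint ℂ) (hab : a ≠ b)
    (hpre : ratSpherePreimage P Q a ∪ ratSpherePreimage P Q b ⊆ realLine) :
    ∃ S : Set ℂ, IsCircleOrLine S ∧
      ∀ x : ℝ, Q.eval (x : ℂ) ≠ 0 → P.eval (x : ℂ) / Q.eval (x : ℂ) ∈ S := by
  have ha := Set.subset_union_left.trans hpre
  have hb := Set.subset_union_right.trans hpre
  induction a using OnePoint.rec <;> induction b using OnePoint.rec <;>
    simp only [ratSpherePreimage_infty, ratSpherePreimage_coe] at ha hb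
  case infty.infty => exact absurd rfl hab
  case infty.coe w => exact exists_isCircleOrLine_of_infty_coe ha hb
  case coe.infty w => exact exists_isCircleOrLine_of_infty_coe hb ha
  case coe.coe w₁ w₂ => exact exists_isCircleOrLine_of_coe_coe (by simpa using hab) ha hb

/-- If the full preimage of two distinct points of the Riemann sphere under a nonconstant
rational function `P/Q` lies on the real line, then `P/Q` maps the real line (minus the
poles, i.e. the zeros of `Q`) into a Euclidean circle or straight line in `ℂ`. -/
theorem rational_two_real_preimages
    (P Q : Polynomial ℂ) (hQ : Q ≠ 0) (hcop : IsCoprime P Q)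
    (hnc : ¬ ∃ c : ℂ, ∀ z : ℂ, Q.eval z ≠ 0 → P.eval z / Q.eval z = c)
    (a b : OnePoint ℂ) (hab : a ≠ b)
    (hpre : ratSpherePreimage P Q a ∪ ratSpherePreimage P Q b ⊆ realLine) :
    ∃ S : Set ℂ, IsCircleOrLine S ∧
      ∀ x : ℝ, Q.eval (x : ℂ) ≠ 0 → P.eval (x : ℂ) / Q.eval (x : ℂ) ∈ S :=
  rational_two_real_preimages_general P Q a b hab hpre
end
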